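/- Let m ≥ 1 and c ≥ 0, let R : ℝ → (real m×m matrices) be continuous, and let U : ℝ → (real m×m matrices) be differentiable with U'(t) + U(t)² + R(t) = 0 for all t ≥ 0, such that for every t ≥ 0 the matrix U(t) is positive semidefinite and c·I − U(t) is positive semidefinite. If lim_{t→∞} (1/t)∫₀ᵗ tr(U(s)) ds = 0, then lim_{t→∞} (1/t)∫₀ᵗ tr(U(s)²) ds = 0 and lim_{t→∞} (1/t)∫₀ᵗ tr(R(s)) ds = 0. -/

import Mathlib

open MeasureTheory intervalIntegral Filter Matrix

open scoped ComplexOrder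

/-! Since `0 ≤ U ≤ c`, the trace of the product of the positive semidefinite matrices `U` and
`c - U` is nonnegative, i.e. `tr (U²) ≤ c · tr U`, which squeezes the average of `tr (U²)` to
zero. Taking traces in the Riccati equation and integrating gives
`∫₀ᵗ tr R = tr U(0) - tr U(t) - ∫₀ᵗ tr (U²)`, and the boundary term is bounded because
`0 ≤ tr U ≤ c m`; dividing by `t` shows that the average of `tr R` tends to zero as well. -/

namespace Matrix

variable {𝕜 n : Type*} [RCLike 𝕜]

theorem continuous_of_forall_hasDerivAt_apply {U U' : ℝ → Matrix n n 𝕜}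
    (hU : ∀ t i j, HasDerivAt (fun τ => U τ i j) (U' t i j) t) : Continuous U :=
  continuous_matrix fun i j => continuous_iff_continuousAt.mpr fun t => (hU t i j).continuousAt

variable [Fintype n]

open scoped MatrixOrder in
theorem PosSemidef.trace_mul_nonneg {A B : Matrix n n 𝕜} (hA : A.PosSemidef)
    (hB : B.PosSemidef) : 0 ≤ (A * B).trace := by
  classical
  obtain ⟨C, rfl⟩ := CStarAlgebra.nonneg_iff_eq_star_mul_self.mp hB.nonneg
  rw [star_eq_conjTranspose, ← mul_assoc, trace_mul_comm, ← mul_assoc]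
  exact (hA.mul_mul_conjTranspose_same C).trace_nonneg

theorem hasDerivAt_trace {U : ℝ → Matrix n n 𝕜} {U' : Matrix n n 𝕜} {t : ℝ}
    (hU : ∀ i, HasDerivAt (fun τ => U τ i i) (U' i i) t) :
    HasDerivAt (fun τ => (U τ).trace) U'.trace t :=
  HasDerivAt.fun_sum fun i _ => hU i

variable [DecidableEq n] {U : Matrix n n 𝕜} {c : 𝕜}

theorem PosSemidef.trace_mul_self_le (hU : U.PosSemidef) (hcU : (c • 1 - U).PosSemidef) :
    (U * U).trace ≤ c * U.trace := by
  have h := hU.trace_mul_nonneg hcU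
  rwa [mul_sub, Matrix.mul_smul, mul_one, trace_sub, trace_smul, smul_eq_mul, sub_nonneg] at h

theorem trace_le_of_posSemidef_smul_one_sub (hcU : (c • 1 - U).PosSemidef) :
    U.trace ≤ c * Fintype.card n := by
  have h := hcU.trace_nonneg
  rwa [trace_sub, trace_smul, trace_one, smul_eq_mul, sub_nonneg] at h

end Matrix

theorem tendsto_average_zero_of_nonneg_of_le {f g : ℝ → ℝ} (hf : Continuous f)
    (hg : Continuous g) (hf0 : ∀ s, 0 ≤ s → 0 ≤ f s) (hfg : ∀ s, 0 ≤ s → f s ≤ g s)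
    (hg0 : Tendsto (fun t => (1 / t) * ∫ s in (0:ℝ)..t, g s) atTop (nhds 0)) :
    Tendsto (fun t => (1 / t) * ∫ s in (0:ℝ)..t, f s) atTop (nhds 0) := by
  refine squeeze_zero' ?_ ?_ hg0 <;> filter_upwards [eventually_ge_atTop 0] with t ht
  · exact mul_nonneg (by positivity) (integral_nonneg ht fun s hs => hf0 s hs.1)
  · gcongr
    exact integral_mono_on ht (hf.intervalIntegrable 0 t) (hg.intervalIntegrable 0 t)
      fun s hs => hfg s hs.1

theorem integral_trace_eq_of_riccati {n : Type*} [Fintype n] {R U U' : ℝ → Matrix n n ℝ}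
    (hR : Continuous R) (hU : ∀ t i j, HasDerivAt (fun τ => U τ i j) (U' t i j) t)
    (hric : ∀ t, 0 ≤ t → U' t + U t * U t + R t = 0) {t : ℝ} (ht : 0 ≤ t) :
    ∫ s in (0:ℝ)..t, (R s).trace =
      (U 0).trace - (U t).trace - ∫ s in (0:ℝ)..t, (U s * U s).trace := by
  have hUc := continuous_of_forall_hasDerivAt_apply hU
  have hsq : Continuous fun s => (U s * U s).trace := (hUc.matrix_mul hUc).matrix_trace
  have hderiv : ∀ s ∈ Set.uIcc 0 t,
      HasDerivAt (fun τ => (U τ).trace) (-((U s * U s).trace + (R s).trace)) s := by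
    intro s hs
    rw [Set.uIcc_of_le ht] at hs
    have hU' : U' s = -(U s * U s + R s) :=
      eq_neg_of_add_eq_zero_left (by rw [← add_assoc]; exact hric s hs.1)
    simpa [hU'] using hasDerivAt_trace fun i => hU s i i
  have hftc := integral_eq_sub_of_hasDerivAt hderiv
    ((hsq.add hR.matrix_trace).neg.intervalIntegrable 0 t)
  rw [intervalIntegral.integral_neg, integral_add (hsq.intervalIntegrable 0 t)
    (hR.matrix_trace.intervalIntegrable 0 t)] at hftc
  linarith

theorem avg_trace_sq_and_R_tendsto_zero_general (m : ℕ) (c : ℝ)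
    (R U U' : ℝ → Matrix (Fin m) (Fin m) ℝ)
    (hR : Continuous R)
    (hU : ∀ t, ∀ i j, HasDerivAt (fun τ => U τ i j) (U' t i j) t)
    (hric : ∀ t, 0 ≤ t → U' t + U t * U t + R t = 0)
    (hpsd : ∀ t, 0 ≤ t → (U t).PosSemidef)
    (hle : ∀ t, 0 ≤ t → (c • (1 : Matrix (Fin m) (Fin m) ℝ) - U t).PosSemidef)
    (hzero : Tendsto (fun t : ℝ => (1 / t) * ∫ s in (0:ℝ)..t, (U s).trace) atTop (nhds 0)) :
    Tendsto (fun t : ℝ => (1 / t) * ∫ s in (0:ℝ)..t, (U s * U s).trace) atTop (nhds 0) ∧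
    Tendsto (fun t : ℝ => (1 / t) * ∫ s in (0:ℝ)..t, (R s).trace) atTop (nhds 0) := by
  have hUc := continuous_of_forall_hasDerivAt_apply hU
  have hsq : Tendsto (fun t : ℝ => (1 / t) * ∫ s in (0:ℝ)..t, (U s * U s).trace)
      atTop (nhds 0) := by
    refine tendsto_average_zero_of_nonneg_of_le (hUc.matrix_mul hUc).matrix_trace
      (continuous_const.mul hUc.matrix_trace)
      (fun s hs => (hpsd s hs).trace_mul_nonneg (hpsd s hs))
      (fun s hs => (hpsd s hs).trace_mul_self_le (hle s hs)) ?_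
    simpa [intervalIntegral.integral_const_mul, mul_left_comm] using hzero.const_mul c
  have hbdry : Tendsto (fun t : ℝ => (1 / t) * ((U 0).trace - (U t).trace)) atTop (nhds 0) := by
    simp_rw [one_div]
    refine tendsto_inv_atTop_zero.zero_mul_isBoundedUnder_le
      (isBoundedUnder_of_eventually_le (a := |(U 0).trace| + c * m) ?_)
    filter_upwards [eventually_ge_atTop 0] with t ht
    have htrace : ‖(U t).trace‖ ≤ c * m := by
      rw [Real.norm_of_nonneg (hpsd t ht).trace_nonneg]
      simpa using trace_le_of_posSemidef_smul_one_sub (hle t ht)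
    calc ‖(U 0).trace - (U t).trace‖ ≤ ‖(U 0).trace‖ + ‖(U t).trace‖ := norm_sub_le _ _
      _ ≤ |(U 0).trace| + c * m := by rw [Real.norm_eq_abs]; gcongr
  refine ⟨hsq, (sub_self (0:ℝ) ▸ hbdry.sub hsq).congr' ?_⟩
  filter_upwards [eventually_ge_atTop 0] with t ht
  rw [integral_trace_eq_of_riccati hR hU hric ht]
  ring

/-- Zero-exponent rigidity (analytic core of Lemma 3.5): for a bounded Riccati solution
`0 ≤ U(t) ≤ c • I` of `U' + U² + R = 0`, if the asymptotic average of `tr U` vanishes, then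
so do the asymptotic averages of `tr (U²)` and of `tr R`. -/
theorem avg_trace_sq_and_R_tendsto_zero (m : ℕ) (hm : 1 ≤ m) (c : ℝ) (hc : 0 ≤ c)
    (R U U' : ℝ → Matrix (Fin m) (Fin m) ℝ)
    (hR : Continuous R)
    (hU : ∀ t, ∀ i j, HasDerivAt (fun τ => U τ i j) (U' t i j) t)
    (hric : ∀ t, 0 ≤ t → U' t + U t * U t + R t = 0)
    (hpsd : ∀ t, 0 ≤ t → (U t).PosSemidef)
    (hle : ∀ t, 0 ≤ t → (c • (1 : Matrix (Fin m) (Fin m) ℝ) - U t).PosSemidef)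
    (hzero : Tendsto (fun t : ℝ => (1 / t) * ∫ s in (0:ℝ)..t, (U s).trace) atTop (nhds 0)) :
    Tendsto (fun t : ℝ => (1 / t) * ∫ s in (0:ℝ)..t, (U s * U s).trace) atTop (nhds 0) ∧
    Tendsto (fun t : ℝ => (1 / t) * ∫ s in (0:ℝ)..t, (R s).trace) atTop (nhds 0) :=
  avg_trace_sq_and_R_tendsto_zero_general m c R U U' hR hU hric hpsd hle hzero
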